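/- Let h: F_m → F_n be an injective homomorphism of finitely generated free groups (each with a fixed basis), and let φ, ψ be injective endomorphisms of F_m, F_n respectively with h ∘ φ = ψ ∘ h. Then h(fix(φ)) ⊆ fix(ψ), and the map W ↦ h̄(W) := lim_i h(W_i) is a well-defined injection from the set of attracting fixed words of φ into the set of attracting fixed words of ψ. -/

import Mathlib

open Filter

namespace ZZFix

/-- A letter: a basis element together with a sign. -/
abbrev Letter (α : Type*) := α × Bool

/-- The inverse letter. -/
def linv {α : Type*} (l : Letter α) : Letter α := (l.1, !l.2)

/-- An infinite reduced word: a sequence of letters with no adjacent cancellation. -/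
def InfWord (α : Type*) : Type _ := {w : ℕ → Letter α // ∀ i, w (i + 1) ≠ linv (w i)}

/-- The length-`i` prefix of an infinite reduced word, as a list of letters. -/
def prefixList {α : Type*} (W : InfWord α) (i : ℕ) : List (Letter α) :=
  (List.range i).map W.1

/-- The length-`i` prefix of an infinite reduced word, as an element of the free group. -/
def wordPrefix {α : Type*} (W : InfWord α) (i : ℕ) : FreeGroup α :=
  FreeGroup.mk (prefixList W i)

/-- Length of the longest common prefix of two lists. -/
def commonPrefixLength {β : Type*} [DecidableEq β] : List β → List β → ℕ
  | a :: as, b :: bs => if a = b then commonPrefixLength as bs + 1 else 0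
  | _, _ => 0

variable {α : Type*} [DecidableEq α]

/-- `|W ∧ g|` for an infinite reduced word `W` and a finite reduced word `g`. -/
def wedgeF (W : InfWord α) (g : FreeGroup α) : ℕ :=
  commonPrefixLength (prefixList W (FreeGroup.toWord g).length) (FreeGroup.toWord g)

/-- `|g ∧ h|` for finite reduced words. -/
def wedgeFF (g h : FreeGroup α) : ℕ :=
  commonPrefixLength (FreeGroup.toWord g) (FreeGroup.toWord h)

/-- `|W ∧ V|` for infinite reduced words, valued in `ℕ∞` (it is `⊤` iff `W = V`). -/
noncomputable def wedgeI {α : Type*} (W V : InfWord α) : ℕ∞ :=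
  sSup ((fun i : ℕ => (i : ℕ∞)) '' {i : ℕ | prefixList W i = prefixList V i})

/-- A sequence of group elements converges to the infinite reduced word `W`
(in the initial segment metric on `F ⊔ ∂F`). -/
def ConvergesTo (u : ℕ → FreeGroup α) (W : InfWord α) : Prop :=
  Tendsto (fun i => wedgeF W (u i)) atTop atTop

/-- `W` is a fixed infinite word of `φ`: `|W ∧ φ(W_i)| → ∞`. -/
def IsFixedInfWord (φ : FreeGroup α →* FreeGroup α) (W : InfWord α) : Prop :=
  Tendsto (fun i => wedgeF W (φ (wordPrefix W i))) atTop atTop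

/-- `W` is an attracting fixed word of `φ`: it is fixed and `|W ∧ φ(W_i)| - i → +∞`. -/
def IsAttractingFixedWord (φ : FreeGroup α →* FreeGroup α) (W : InfWord α) : Prop :=
  IsFixedInfWord φ W ∧
    Tendsto (fun i => (wedgeF W (φ (wordPrefix W i)) : ℤ) - (i : ℤ)) atTop atTop

/-- The fixed subgroup of an endomorphism. -/
def fixedSubgroup {G : Type*} [Group G] (φ : G →* G) : Subgroup G where
  carrier := {g | φ g = g}
  one_mem' := map_one φ
  mul_mem' := by
    intro a b ha hb
    simp only [Set.mem_setOf_eq] at *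
    rw [map_mul, ha, hb]
  inv_mem' := by
    intro a ha
    simp only [Set.mem_setOf_eq] at *
    rw [map_inv, ha]

/-- The rank (minimal number of generators) of a subgroup, valued in `ℕ∞`. -/
noncomputable def grpRank {G : Type*} [Group G] (H : Subgroup G) : ℕ∞ :=
  sInf {k : ℕ∞ | ∃ S : Finset G, Subgroup.closure (S : Set G) = H ∧ (S.card : ℕ∞) = k}

/-- Two infinite reduced words are equivalent (w.r.t. `φ`) if `W' = U·W` for some
`U ∈ fix(φ)`, i.e. the reduced products `U·W_i` converge to `W'`. -/
def EquivFixedWords (φ : FreeGroup α →* FreeGroup α) (W W' : InfWord α) : Prop :=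
  ∃ U ∈ fixedSubgroup φ, ConvergesTo (fun i => U * wordPrefix W i) W'

/-- `a(φ)`: the number of equivalence classes of attracting fixed words, in `ℕ∞`. -/
noncomputable def aCard (φ : FreeGroup α →* FreeGroup α) : ℕ∞ :=
  ENat.card (Quot fun (W W' : {W : InfWord α // IsAttractingFixedWord φ W}) =>
    EquivFixedWords φ W.1 W'.1)

/-- The inner automorphism `i_c : g ↦ c g c⁻¹`, as a monoid homomorphism. -/
def innerAut {G : Type*} [Group G] (c : G) : G →* G := (MulAut.conj c).toMonoidHom

/-- Two endomorphisms are similar if `ψ₂ = i_c ∘ ψ₁ ∘ i_c⁻¹` for some `c`. -/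
def Similar {G : Type*} [Group G] (ψ₁ ψ₂ : G →* G) : Prop :=
  ∃ c : G, ψ₂ = ((innerAut c).comp ψ₁).comp (innerAut c⁻¹)

/-- The trace of the endomorphism of `ℤⁿ` induced by `φ` on the abelianization. -/
def abTrace {n : ℕ} (φ : FreeGroup (Fin n) →* FreeGroup (Fin n)) : ℤ :=
  ∑ i : Fin n, Multiplicative.toAdd
    ((FreeGroup.lift fun k => Multiplicative.ofAdd (if k = i then (1 : ℤ) else 0))
      (φ (FreeGroup.of i)))

/-- The constant infinite reduced word `l l l ⋯`. -/
def constWord {α : Type*} (l : Letter α) : InfWord α :=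
  ⟨fun _ => l, fun _ h => by
    have h2 := congrArg Prod.snd h
    simp [linv] at h2⟩

/-- `W` is an attracting fixed point of `φ`: it is fixed, and there is `i₀` such that
every finite or infinite reduced word `V` with `|W ∧ V| ≥ i₀` satisfies
`|W ∧ φᵖ(V)| → ∞` as `p → ∞`. -/
def IsAttractingFixedPoint (φ : FreeGroup α →* FreeGroup α) (W : InfWord α) : Prop :=
  IsFixedInfWord φ W ∧
    ∃ i₀ : ℕ,
      (∀ g : FreeGroup α, i₀ ≤ wedgeF W g →
        Tendsto (fun p => wedgeF W ((⇑φ)^[p] g)) atTop atTop) ∧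
      (∀ V : InfWord α, (i₀ : ℕ∞) ≤ wedgeI W V →
        ∀ Vs : ℕ → InfWord α, Vs 0 = V →
          (∀ p, ConvergesTo (fun i => φ (wordPrefix (Vs p) i)) (Vs (p + 1))) →
          Tendsto (fun p => wedgeI W (Vs p)) atTop atTop)

open scoped Classical in
/-- The initial segment metric. -/
noncomputable def distIS {α : Type*} (W V : InfWord α) : ℝ :=
  if W = V then 0 else 1 / (1 + ((wedgeI W V).toNat : ℝ))

/-!
In the Cayley tree of a free group, `wedgeFF x y` is the Gromov product and
`|x⁻¹ y| = |x| + |y| - 2 wedgeFF x y`. An injective homomorphism `h` of free groups of finite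
rank is proper (preimages of balls are finite), and properness forces bounded cancellation: if `u`
is an initial segment of `g`, then `h u` and `h g` agree except on the last `B` letters of `h u`.
So the images `h (W_i)` of the initial segments of an infinite word stabilise letter by letter to
an infinite word `h̄ W`, and properness once more makes `W ↦ h̄ W` injective.

If `W` is attracting for `φ`, then `φ (W_i)` begins with `W_d` for some `d` much larger than `i`.
Applying `h` and using `h ∘ φ = ψ ∘ h`, the prefix of `h̄ W` of length about `|h (W_i)|` is sent
by `ψ` to a word beginning with the prefix of `h̄ W` of length about `|h (W_d)|`, and the gap
`|h (W_d)| - |h (W_i)|` is unbounded by properness.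
-/

section CommonPrefix

variable {β : Type*} [DecidableEq β]

theorem le_commonPrefixLength_iff {a b : List β} {k : ℕ} :
    k ≤ commonPrefixLength a b ↔ k ≤ a.length ∧ k ≤ b.length ∧ a.take k = b.take k := by
  induction a generalizing b k with
  | nil => cases b <;> cases k <;> simp [commonPrefixLength]
  | cons x a ih =>
    cases b with
    | nil => cases k <;> simp [commonPrefixLength]
    | cons y b =>
      cases k with
      | zero => simp
      | succ k => by_cases hxy : x = y <;> simp [commonPrefixLength, hxy, ih]

theorem commonPrefixLength_comm (a b : List β) :
    commonPrefixLength a b = commonPrefixLength b a := by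
  have key (a b : List β) : commonPrefixLength a b ≤ commonPrefixLength b a :=
    have ⟨ha, hb, hab⟩ := le_commonPrefixLength_iff.1 le_rfl
    le_commonPrefixLength_iff.2 ⟨hb, ha, hab.symm⟩
  exact le_antisymm (key a b) (key b a)

theorem commonPrefixLength_le_length_left (a b : List β) : commonPrefixLength a b ≤ a.length :=
  (le_commonPrefixLength_iff.1 le_rfl).1

theorem commonPrefixLength_le_length_right (a b : List β) :
    commonPrefixLength a b ≤ b.length :=
  (le_commonPrefixLength_iff.1 le_rfl).2.1

theorem min_le_commonPrefixLength (a b c : List β) :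
    min (commonPrefixLength a b) (commonPrefixLength b c) ≤ commonPrefixLength a c := by
  set k := min (commonPrefixLength a b) (commonPrefixLength b c)
  obtain ⟨ha, -, hab⟩ := le_commonPrefixLength_iff.1 (min_le_left _ _ : k ≤ commonPrefixLength a b)
  obtain ⟨-, hc, hbc⟩ := le_commonPrefixLength_iff.1 (min_le_right _ _ : k ≤ commonPrefixLength b c)
  exact le_commonPrefixLength_iff.2 ⟨ha, hc, hab.trans hbc⟩

theorem length_le_commonPrefixLength_iff {a b : List β} :
    a.length ≤ commonPrefixLength a b ↔ a <+: b := by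
  rw [le_commonPrefixLength_iff, List.prefix_iff_eq_take, List.take_length]
  constructor
  · rintro ⟨-, -, h⟩; exact h
  · intro h; exact ⟨le_rfl, h ▸ by simp, h⟩

end CommonPrefix

section GromovProduct

open FreeGroup

theorem toWord_mk_of_isReduced {L : List (α × Bool)} (hL : IsReduced L) : (mk L).toWord = L := by
  rw [toWord_mk, hL.reduce_eq]

theorem isReduced_invRev {L : List (α × Bool)} (hL : IsReduced L) : IsReduced (invRev L) := by
  rw [← toWord_mk_of_isReduced hL, ← toWord_inv]
  exact isReduced_toWord

theorem toWord_mk_of_prefix {L : List (α × Bool)} {g : FreeGroup α} (h : L <+: g.toWord) :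
    (mk L).toWord = L :=
  toWord_mk_of_isReduced (isReduced_toWord.infix h.isInfix)

theorem le_wedgeFF_iff {x y : FreeGroup α} {k : ℕ} :
    k ≤ wedgeFF x y ↔ k ≤ x.norm ∧ k ≤ y.norm ∧ x.toWord.take k = y.toWord.take k :=
  le_commonPrefixLength_iff

theorem wedgeFF_comm (x y : FreeGroup α) : wedgeFF x y = wedgeFF y x :=
  commonPrefixLength_comm _ _

theorem wedgeFF_le_norm_left (x y : FreeGroup α) : wedgeFF x y ≤ x.norm :=
  commonPrefixLength_le_length_left _ _

theorem wedgeFF_le_norm_right (x y : FreeGroup α) : wedgeFF x y ≤ y.norm :=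
  commonPrefixLength_le_length_right _ _

theorem min_le_wedgeFF (x y z : FreeGroup α) : min (wedgeFF x y) (wedgeFF y z) ≤ wedgeFF x z :=
  min_le_commonPrefixLength _ _ _

theorem exists_prefix_norm_eq_wedgeFF (x y : FreeGroup α) :
    ∃ m : FreeGroup α, m.norm = wedgeFF x y ∧ m.toWord <+: x.toWord ∧ m.toWord <+: y.toWord := by
  obtain ⟨hx, -, hxy⟩ := le_wedgeFF_iff.1 (le_refl (wedgeFF x y))
  have hm := toWord_mk_of_prefix (List.take_prefix (wedgeFF x y) x.toWord)
  refine ⟨mk (x.toWord.take (wedgeFF x y)), ?_, ?_, ?_⟩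
  · rw [FreeGroup.norm, hm, List.length_take_of_le hx]
  · rw [hm]; exact List.take_prefix _ _
  · rw [hm, hxy]; exact List.take_prefix _ _

theorem norm_le_wedgeFF_iff {x y : FreeGroup α} : x.norm ≤ wedgeFF x y ↔ x.toWord <+: y.toWord :=
  length_le_commonPrefixLength_iff

theorem norm_inv_mul_add_two_mul_wedgeFF (x y : FreeGroup α) :
    (x⁻¹ * y).norm + 2 * wedgeFF x y = x.norm + y.norm := by
  obtain ⟨hcx, hcy, htake⟩ := le_wedgeFF_iff.1 (le_refl (wedgeFF x y))
  obtain ⟨p, a, b, hp, hxw, hyw⟩ : ∃ p a b, p.length = wedgeFF x y ∧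
      x.toWord = p ++ a ∧ y.toWord = p ++ b :=
    ⟨_, _, _, List.length_take_of_le hcx, (List.take_append_drop _ _).symm,
      by rw [htake, List.take_append_drop]⟩
  have hxy : x⁻¹ * y = mk (invRev a ++ b) := by
    rw [← mk_toWord (x := x), ← mk_toWord (x := y), hxw, hyw, ← mul_mk, ← mul_mk, mul_inv_rev,
      mul_assoc, inv_mul_cancel_left, inv_mk, mul_mk]
  have ha : IsReduced a := isReduced_toWord.infix (hxw ▸ (List.suffix_append p a).isInfix)
  have hb : IsReduced b := isReduced_toWord.infix (hyw ▸ (List.suffix_append p b).isInfix)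
  have hred : IsReduced (invRev a ++ b) := by
    refine List.isChain_append.2 ⟨isReduced_invRev ha, hb, ?_⟩
    intro l hl r hr hlr
    cases a with
    | nil => simp [invRev] at hl
    | cons a₀ a' =>
    cases b with
    | nil => simp at hr
    | cons b₀ b' =>
    obtain rfl : l = (a₀.1, !a₀.2) := by simpa [invRev] using hl.symm
    obtain rfl : r = b₀ := by simpa using hr.symm
    rcases eq_or_ne r a₀ with hab | hab
    · -- equal first letters of `a` and `b` would extend the common prefix
      have : wedgeFF x y + 1 ≤ wedgeFF x y := le_wedgeFF_iff.2
        ⟨by simp [FreeGroup.norm, hxw, hp], by simp [FreeGroup.norm, hyw, hp],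
          by simp [hxw, hyw, hab, List.take_append, hp]⟩
      omega
    · exact (Bool.eq_not.2 fun h => hab (Prod.ext hlr.symm h)).symm
  rw [hxy, FreeGroup.norm, toWord_mk_of_isReduced hred, FreeGroup.norm, FreeGroup.norm, hxw, hyw]
  simp only [List.length_append, invRev_length, hp]
  omega

theorem wedgeFF_add_wedgeFF_inv_mul (x y : FreeGroup α) :
    wedgeFF x y + wedgeFF x⁻¹ (x⁻¹ * y) = x.norm := by
  have h₁ := norm_inv_mul_add_two_mul_wedgeFF x y
  have h₂ := norm_inv_mul_add_two_mul_wedgeFF x⁻¹ (x⁻¹ * y)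
  rw [inv_inv, mul_inv_cancel_left, norm_inv_eq] at h₂
  omega

theorem norm_inv_mul_comm (x y : FreeGroup α) : (x⁻¹ * y).norm = (y⁻¹ * x).norm := by
  rw [← norm_inv_eq, mul_inv_rev, inv_inv]

theorem norm_inv_mul_le (x y z : FreeGroup α) :
    (x⁻¹ * z).norm ≤ (x⁻¹ * y).norm + (y⁻¹ * z).norm := by
  simpa [mul_assoc] using norm_mul_le (x⁻¹ * y) (y⁻¹ * z)

theorem norm_le_wedgeFF_mul_add_norm (x y : FreeGroup α) :
    x.norm ≤ wedgeFF x (x * y) + y.norm := by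
  have h₁ := norm_inv_mul_add_two_mul_wedgeFF x (x * y)
  have h₂ : x.norm ≤ (x * y).norm + y.norm := by
    simpa using FreeGroup.norm_mul_le (x * y) y⁻¹
  rw [inv_mul_cancel_left] at h₁
  omega

theorem norm_inv_mul_add_norm_of_prefix {x y : FreeGroup α} (h : x.toWord <+: y.toWord) :
    (x⁻¹ * y).norm + x.norm = y.norm := by
  have := norm_inv_mul_add_two_mul_wedgeFF x y
  have := norm_le_wedgeFF_iff.2 h
  have := wedgeFF_le_norm_left x y
  omega

theorem norm_inv_mul_eq_add_of_prefix_of_not_prefix {m x y : FreeGroup α}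
    (hx : m.toWord <+: x.toWord) (hy : ¬ m.toWord <+: y.toWord) :
    (x⁻¹ * y).norm = (x⁻¹ * m).norm + (m⁻¹ * y).norm := by
  have hmx := norm_le_wedgeFF_iff.2 hx
  have hmy : wedgeFF m y < m.norm := lt_of_not_ge (mt norm_le_wedgeFF_iff.1 hy)
  have := min_le_wedgeFF x m y
  have := min_le_wedgeFF m x y
  have := wedgeFF_le_norm_left m x
  have := norm_inv_mul_add_two_mul_wedgeFF x y
  have := norm_inv_mul_add_two_mul_wedgeFF x m
  have := norm_inv_mul_add_two_mul_wedgeFF m y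
  rw [wedgeFF_comm x m] at *
  omega

end GromovProduct

section Lipschitz

open FreeGroup

variable {β : Type*} [DecidableEq β] [Fintype β]

noncomputable def lipConst (f : FreeGroup β →* FreeGroup α) : ℕ :=
  Finset.univ.sup fun b => (f (of b)).norm

theorem norm_map_le (f : FreeGroup β →* FreeGroup α) (g : FreeGroup β) :
    (f g).norm ≤ lipConst f * g.norm := by
  have hof (b : β) : (f (of b)).norm ≤ lipConst f :=
    Finset.le_sup (f := fun b => (f (of b)).norm) (Finset.mem_univ b)
  suffices h : ∀ L : List (β × Bool), (f (mk L)).norm ≤ lipConst f * L.length by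
    simpa only [mk_toWord, FreeGroup.norm] using h g.toWord
  intro L
  induction L with
  | nil => simp [← one_eq_mk]
  | cons l L ih =>
    have hl : (f (mk [l])).norm ≤ lipConst f := by
      obtain ⟨b, _ | _⟩ := l
      · have : mk [(b, false)] = (of b)⁻¹ := by simp [of, inv_mk, invRev]
        rw [this, _root_.map_inv, norm_inv_eq]
        exact hof b
      · exact hof b
    calc (f (mk (l :: L))).norm = (f (mk [l]) * f (mk L)).norm := by
          rw [← _root_.map_mul, mul_mk, List.singleton_append]
      _ ≤ lipConst f + lipConst f * L.length := (FreeGroup.norm_mul_le _ _).trans (add_le_add hl ih)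
      _ = lipConst f * (l :: L).length := by simp [mul_add, add_comm]

end Lipschitz

section Properness

open FreeGroup

variable [Fintype α] {β : Type*} [DecidableEq β]

theorem exists_norm_le_of_norm_map_le {f : FreeGroup β →* FreeGroup α}
    (hf : Function.Injective f) (N : ℕ) : ∃ R, ∀ g, (f g).norm ≤ N → g.norm ≤ R := by
  have hball : {x : FreeGroup α | x.norm ≤ N}.Finite :=
    (List.finite_length_le _ N).preimage toWord_injective.injOn
  obtain ⟨R, hR⟩ := ((hball.preimage hf.injOn).image FreeGroup.norm).bddAbove
  exact ⟨R, fun g hg => hR ⟨g, hg, rfl⟩⟩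

theorem tendsto_norm_map_of_injective {f : FreeGroup β →* FreeGroup α}
    (hf : Function.Injective f) {ι : Type*} {l : Filter ι} {u : ι → FreeGroup β}
    (hu : Tendsto (fun i => (u i).norm) l atTop) : Tendsto (fun i => (f (u i)).norm) l atTop := by
  refine tendsto_atTop.2 fun N => ?_
  obtain ⟨R, hR⟩ := exists_norm_le_of_norm_map_le hf N
  filter_upwards [tendsto_atTop.1 hu (R + 1)] with i hi
  by_contra! h
  have := hR _ h.le
  omega

end Properness

section BoundedCancellation

open FreeGroup

theorem exists_not_iff_succ_of_not_iff {p : ℕ → Prop} {a b : ℕ} (hab : a ≤ b)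
    (h : ¬ (p a ↔ p b)) : ∃ t, a ≤ t ∧ t < b ∧ ¬ (p t ↔ p (t + 1)) := by
  induction b, hab using Nat.le_induction with
  | base => exact absurd Iff.rfl h
  | succ b hab ih =>
    by_cases hb : p a ↔ p b
    · exact ⟨b, hab, lt_add_one b, fun h' => h (hb.trans h')⟩
    · obtain ⟨t, h₁, h₂, h₃⟩ := ih hb
      exact ⟨t, h₁, h₂.trans (lt_add_one b), h₃⟩

theorem exists_near_of_crossing {z : ℕ → FreeGroup α} {K : ℕ}
    (hz : ∀ t, ((z t)⁻¹ * z (t + 1)).norm ≤ K) (m : FreeGroup α) {a b : ℕ} (hab : a ≤ b)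
    (hcross : ¬ (m.toWord <+: (z a).toWord ↔ m.toWord <+: (z b).toWord)) :
    ∃ t, a ≤ t ∧ t < b ∧ ((z t)⁻¹ * m).norm ≤ K ∧ ((z (t + 1))⁻¹ * m).norm ≤ K := by
  obtain ⟨t, hat, htb, ht⟩ :=
    exists_not_iff_succ_of_not_iff (p := fun t => m.toWord <+: (z t).toWord) hab hcross
  have hgeo : ((z t)⁻¹ * z (t + 1)).norm = ((z t)⁻¹ * m).norm + ((z (t + 1))⁻¹ * m).norm := by
    by_cases hm : m.toWord <+: (z t).toWord
    · rw [norm_inv_mul_eq_add_of_prefix_of_not_prefix hm (fun h => ht (iff_of_true hm h)),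
        norm_inv_mul_comm m]
    · rw [norm_inv_mul_comm, norm_inv_mul_eq_add_of_prefix_of_not_prefix (by tauto) hm,
        norm_inv_mul_comm m, add_comm]
  have := hz t
  exact ⟨t, hat, htb, by omega, by omega⟩

/-- The path leaves the subtree beyond `m` to reach `1` and then re-enters it, passing within `K`
of `m` both times; by `hproper` these two times are at most `R` apart, and the path travels from
the first one to `1` in between. -/
theorem norm_le_of_path {z : ℕ → FreeGroup α} {K R N ν : ℕ}
    (hlip : ∀ s t, s ≤ t → ((z s)⁻¹ * z t).norm ≤ K * (t - s))
    (hproper : ∀ s t, s ≤ t → t ≤ N → ((z s)⁻¹ * z t).norm ≤ 2 * K → t - s ≤ R)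
    (hν : ν ≤ N) (hzν : z ν = 1) {m : FreeGroup α} (h₀ : m.toWord <+: (z 0).toWord)
    (hN : m.toWord <+: (z N).toWord) : m.norm ≤ K * R + K := by
  rcases eq_or_ne m 1 with rfl | hm
  · simp
  have hmν : ¬ m.toWord <+: (z ν).toWord := by
    rwa [hzν, toWord_one, List.prefix_nil, toWord_eq_nil_iff]
  have hz (t : ℕ) : ((z t)⁻¹ * z (t + 1)).norm ≤ K := by simpa using hlip t (t + 1) (by omega)
  obtain ⟨t₁, -, ht₁, -, hd₁⟩ := exists_near_of_crossing hz m (Nat.zero_le ν) (by tauto)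
  obtain ⟨t₂, ht₂, ht₂N, hd₂, -⟩ := exists_near_of_crossing hz m hν (by tauto)
  have hgap : t₂ - (t₁ + 1) ≤ R := by
    refine hproper _ _ (by omega) ht₂N.le ?_
    have := norm_inv_mul_le (z (t₁ + 1)) m (z t₂)
    rw [norm_inv_mul_comm m] at this
    omega
  have hback : ((z (t₁ + 1))⁻¹ * z ν).norm ≤ K * R :=
    (hlip _ _ ht₁).trans (Nat.mul_le_mul_left K (by omega))
  calc m.norm = ((z ν)⁻¹ * m).norm := by rw [hzν, inv_one, one_mul]
    _ ≤ ((z ν)⁻¹ * z (t₁ + 1)).norm + ((z (t₁ + 1))⁻¹ * m).norm := norm_inv_mul_le _ _ _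
    _ ≤ K * R + K := by rw [norm_inv_mul_comm]; omega

variable {β : Type*} [DecidableEq β]

def IsCancellationBound (f : FreeGroup β →* FreeGroup α) (B : ℕ) : Prop :=
  ∀ u g : FreeGroup β, u.toWord <+: g.toWord → (f u).norm ≤ wedgeFF (f u) (f g) + B

theorem exists_isCancellationBound [Fintype α] [Fintype β] {f : FreeGroup β →* FreeGroup α}
    (hf : Function.Injective f) : ∃ B, IsCancellationBound f B := by
  obtain ⟨R, hR⟩ := exists_norm_le_of_norm_map_le hf (2 * lipConst f)
  refine ⟨lipConst f * R + lipConst f, fun u g hug => ?_⟩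
  set p : ℕ → FreeGroup β := fun t => mk (g.toWord.take t)
  have hpw (t : ℕ) : (p t).toWord = g.toWord.take t := toWord_mk_of_prefix (List.take_prefix _ _)
  have hp (s t : ℕ) (hst : s ≤ t) : ((p s)⁻¹ * p t).norm + min s g.norm = min t g.norm := by
    have := norm_inv_mul_add_norm_of_prefix (x := p s) (y := p t)
      (by rw [hpw, hpw]; exact List.take_prefix_take_left hst)
    simpa [FreeGroup.norm, hpw] using this
  have hpu : p u.norm = u := by
    show mk (g.toWord.take u.toWord.length) = u
    rw [← List.prefix_iff_eq_take.1 hug, mk_toWord]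
  have hpg : p g.norm = g := by simp [p, FreeGroup.norm, mk_toWord]
  -- the image under `f` of the initial segments of `g`, translated to pass through `1` at `u`
  set z : ℕ → FreeGroup α := fun t => f (u⁻¹ * p t)
  have hz (s t : ℕ) : (z s)⁻¹ * z t = f ((p s)⁻¹ * p t) := by simp [z, mul_assoc]
  obtain ⟨m, hm, hm₀, hmN⟩ := exists_prefix_norm_eq_wedgeFF (z 0) (z g.norm)
  have hmK : m.norm ≤ lipConst f * R + lipConst f := by
    refine norm_le_of_path (N := g.norm) (ν := u.norm) (fun s t hst => ?_)
      (fun s t hst htN hd => ?_) ?_ (by simp [z, hpu]) hm₀ hmN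
    · rw [hz]
      refine (norm_map_le f _).trans (Nat.mul_le_mul_left _ ?_)
      have := hp s t hst
      omega
    · rw [hz] at hd
      have := hR _ hd
      have := hp s t hst
      omega
    · exact hug.length_le
  have := wedgeFF_add_wedgeFF_inv_mul (f u) (f g)
  have h0 : z 0 = (f u)⁻¹ := by simp [z, p, ← one_eq_mk]
  have hN : z g.norm = (f u)⁻¹ * f g := by simp [z, hpg]
  rw [h0, hN] at hm
  omega

end BoundedCancellation

section InfiniteWords

@[simp]
theorem length_prefixList {α : Type*} (W : InfWord α) (i : ℕ) : (prefixList W i).length = i := by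
  simp [prefixList]

theorem take_prefixList {α : Type*} (W : InfWord α) {i j : ℕ} (h : j ≤ i) :
    (prefixList W i).take j = prefixList W j := by
  simp [prefixList, ← List.map_take, List.take_range, h]

theorem prefixList_prefix {α : Type*} (W : InfWord α) {i j : ℕ} (h : j ≤ i) :
    prefixList W j <+: prefixList W i :=
  take_prefixList W h ▸ List.take_prefix _ _

theorem InfWord.ext_prefixList {α : Type*} {W V : InfWord α}
    (h : ∀ j, prefixList W j = prefixList V j) : W = V := by
  refine Subtype.ext (funext fun p => ?_)
  simpa [prefixList] using congrArg (·[p]?) (h (p + 1))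

theorem isReduced_prefixList {α : Type*} (W : InfWord α) (i : ℕ) :
    FreeGroup.IsReduced (prefixList W i) := by
  refine List.isChain_iff_getElem.2 fun p hp h₁ => ?_
  simp only [prefixList, List.getElem_map, List.getElem_range] at h₁ ⊢
  by_contra h₂
  exact W.2 p (Prod.ext h₁.symm (Bool.eq_not.2 (Ne.symm h₂)))

theorem toWord_wordPrefix (W : InfWord α) (i : ℕ) : (wordPrefix W i).toWord = prefixList W i :=
  toWord_mk_of_isReduced (isReduced_prefixList W i)

@[simp]
theorem norm_wordPrefix (W : InfWord α) (i : ℕ) : (wordPrefix W i).norm = i := by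
  rw [FreeGroup.norm, toWord_wordPrefix, length_prefixList]

@[simp]
theorem wordPrefix_zero (W : InfWord α) : wordPrefix W 0 = 1 :=
  FreeGroup.norm_eq_zero.1 (norm_wordPrefix W 0)

theorem wordPrefix_prefix (W : InfWord α) {i j : ℕ} (h : j ≤ i) :
    (wordPrefix W j).toWord <+: (wordPrefix W i).toWord := by
  simpa only [toWord_wordPrefix] using prefixList_prefix W h

theorem le_wedgeF_iff {W : InfWord α} {g : FreeGroup α} {k : ℕ} :
    k ≤ wedgeF W g ↔ prefixList W k <+: g.toWord := by
  rw [wedgeF, le_commonPrefixLength_iff, List.prefix_iff_eq_take]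
  simp only [length_prefixList]
  constructor
  · rintro ⟨hk, -, h⟩
    rw [← h, take_prefixList W hk]
  · intro h
    have hk : k ≤ g.toWord.length := by simpa using congrArg List.length h
    exact ⟨hk, hk, by rw [take_prefixList W hk, ← h]⟩

theorem le_wedgeF_wordPrefix (W : InfWord α) (i : ℕ) : i ≤ wedgeF W (wordPrefix W i) :=
  le_wedgeF_iff.2 (by rw [toWord_wordPrefix])

theorem wedgeF_le_norm (W : InfWord α) (g : FreeGroup α) : wedgeF W g ≤ g.norm :=
  commonPrefixLength_le_length_right _ _

theorem min_le_wedgeF (W : InfWord α) (x y : FreeGroup α) :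
    min (wedgeF W x) (wedgeFF x y) ≤ wedgeF W y := by
  obtain ⟨-, hy, hxy⟩ := le_wedgeFF_iff.1 (min_le_right (wedgeF W x) (wedgeFF x y))
  have hx := le_wedgeF_iff.1 (min_le_left (wedgeF W x) (wedgeFF x y))
  rw [List.prefix_iff_eq_take, length_prefixList] at hx
  exact le_wedgeF_iff.2 (hx ▸ hxy ▸ List.take_prefix _ _)

theorem min_wedgeF_le_wedgeFF (W : InfWord α) (x y : FreeGroup α) :
    min (wedgeF W x) (wedgeF W y) ≤ wedgeFF x y := by
  have hx := le_wedgeF_iff.1 (min_le_left (wedgeF W x) (wedgeF W y))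
  have hy := le_wedgeF_iff.1 (min_le_right (wedgeF W x) (wedgeF W y))
  rw [List.prefix_iff_eq_take, length_prefixList] at hx hy
  refine le_wedgeFF_iff.2 ⟨?_, ?_, hx.symm.trans hy⟩
  · exact (min_le_left _ _).trans (wedgeF_le_norm W x)
  · exact (min_le_right _ _).trans (wedgeF_le_norm W y)

theorem InfWord.eq_of_forall_exists_norm_le {W V : InfWord α} {R : ℕ}
    (h : ∀ i, ∃ k, ((wordPrefix W i)⁻¹ * wordPrefix V k).norm ≤ R) : W = V := by
  refine InfWord.ext_prefixList fun j => ?_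
  obtain ⟨k, hk⟩ := h (j + R)
  have h₁ := norm_inv_mul_add_two_mul_wedgeFF (wordPrefix W (j + R)) (wordPrefix V k)
  have h₂ := wedgeFF_le_norm_right (wordPrefix W (j + R)) (wordPrefix V k)
  simp only [norm_wordPrefix] at h₁ h₂
  obtain ⟨-, hjk, htake⟩ :=
    le_wedgeFF_iff.1 (show j ≤ wedgeFF (wordPrefix W (j + R)) (wordPrefix V k) by omega)
  simp only [toWord_wordPrefix, norm_wordPrefix] at htake hjk
  rwa [take_prefixList W (by omega), take_prefixList V hjk] at htake

theorem exists_convergesTo_of_cauchy {u : ℕ → FreeGroup α}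
    (hu : ∀ j, ∃ N, ∀ k ≥ N, j ≤ wedgeFF (u N) (u k)) : ∃ W, ConvergesTo u W := by
  have hletter (p : ℕ) : ∃ a, ∀ᶠ k in atTop, (u k).toWord[p]? = some a := by
    obtain ⟨N, hN⟩ := hu (p + 1)
    have hp : p < (u N).toWord.length := (hN N le_rfl).trans (wedgeFF_le_norm_left _ _)
    refine ⟨(u N).toWord[p], eventually_atTop.2 ⟨N, fun k hk => ?_⟩⟩
    obtain ⟨-, -, htake⟩ := le_wedgeFF_iff.1 (hN k hk)
    simpa [List.getElem?_take, hp] using (congrArg (·[p]?) htake).symm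
  choose w hw using hletter
  have hred (p : ℕ) : w (p + 1) ≠ linv (w p) := by
    obtain ⟨k, hk₁, hk₂⟩ := ((hw p).and (hw (p + 1))).exists
    obtain ⟨_, e₁⟩ := List.getElem?_eq_some_iff.1 hk₁
    obtain ⟨hp₁, e₂⟩ := List.getElem?_eq_some_iff.1 hk₂
    intro h
    have := FreeGroup.isReduced_toWord.getElem p hp₁
    simp [e₁, e₂, h, linv] at this
  refine ⟨⟨w, hred⟩, tendsto_atTop.2 fun j => ?_⟩
  filter_upwards [(eventually_all_finset (Finset.range j)).2 fun p _ => hw p] with k hk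
  refine le_wedgeF_iff.2 (List.prefix_iff_getElem?.2 fun p hp => ?_)
  have hpj : p < j := length_prefixList ⟨w, hred⟩ j ▸ hp
  simpa [prefixList] using hk p (Finset.mem_range.2 hpj)

end InfiniteWords

section Limits

theorem exists_le_le_add_of_le_succ {a : ℕ → ℕ} {K : ℕ} (h₀ : a 0 = 0)
    (hstep : ∀ i, a (i + 1) ≤ a i + K) {n : ℕ} (hn : ∃ i, n ≤ a i) :
    ∃ i, n ≤ a i ∧ a i ≤ n + K := by
  classical
  refine ⟨Nat.find hn, Nat.find_spec hn, ?_⟩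
  have hmin {i : ℕ} (hi : i < Nat.find hn) : a i < n := lt_of_not_ge (Nat.find_min hn hi)
  cases hi : Nat.find hn with
  | zero => omega
  | succ i =>
    have := hmin (hi ▸ lt_add_one i)
    have := hstep i
    omega

variable {β : Type*} [DecidableEq β]

theorem norm_map_wordPrefix_succ_le [Fintype β] (f : FreeGroup β →* FreeGroup α)
    (W : InfWord β) (i : ℕ) :
    (f (wordPrefix W (i + 1))).norm ≤ (f (wordPrefix W i)).norm + lipConst f := by
  have hstep : ((wordPrefix W i)⁻¹ * wordPrefix W (i + 1)).norm = 1 := by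
    have := norm_inv_mul_add_norm_of_prefix (wordPrefix_prefix W (Nat.le_add_right i 1))
    simp only [norm_wordPrefix] at this
    omega
  calc (f (wordPrefix W (i + 1))).norm
      = (f (wordPrefix W i) * f ((wordPrefix W i)⁻¹ * wordPrefix W (i + 1))).norm := by
        rw [← map_mul, mul_inv_cancel_left]
    _ ≤ (f (wordPrefix W i)).norm + lipConst f * 1 :=
        (FreeGroup.norm_mul_le _ _).trans
          (Nat.add_le_add_left ((norm_map_le f _).trans_eq (by rw [hstep])) _)
    _ = _ := by rw [mul_one]

theorem tendsto_norm_map_wordPrefix [Fintype α] {f : FreeGroup β →* FreeGroup α}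
    (hf : Function.Injective f) (W : InfWord β) :
    Tendsto (fun i => (f (wordPrefix W i)).norm) atTop atTop :=
  tendsto_norm_map_of_injective hf (u := wordPrefix W) <| by
    simp only [norm_wordPrefix]
    exact tendsto_id

namespace IsCancellationBound

variable {f : FreeGroup β →* FreeGroup α} {B : ℕ}

theorem exists_convergesTo_map (hB : IsCancellationBound f B) {W : InfWord β}
    (hW : Tendsto (fun i => (f (wordPrefix W i)).norm) atTop atTop) :
    ∃ W', ConvergesTo (fun i => f (wordPrefix W i)) W' := by
  refine exists_convergesTo_of_cauchy fun j => ?_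
  obtain ⟨N, hN⟩ := eventually_atTop.1 (tendsto_atTop.1 hW (j + B))
  refine ⟨N, fun k hk => ?_⟩
  have := hB _ _ (wordPrefix_prefix W hk)
  have := hN N le_rfl
  omega

theorem le_wedgeF_map (hB : IsCancellationBound f B) {W : InfWord β} {W' : InfWord α}
    (hW' : ConvergesTo (fun i => f (wordPrefix W i)) W') {g : FreeGroup β} {k : ℕ}
    (hk : k ≤ wedgeF W g) : (f (wordPrefix W k)).norm - B ≤ wedgeF W' (f g) := by
  set L := (f (wordPrefix W k)).norm - B
  obtain ⟨i, hi, hki⟩ := ((tendsto_atTop.1 hW' L).and (eventually_ge_atTop k)).exists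
  have h₁ : L ≤ wedgeFF (f (wordPrefix W i)) (f (wordPrefix W k)) := by
    have := hB _ _ (wordPrefix_prefix W hki)
    rw [wedgeFF_comm]
    omega
  have h₂ : L ≤ wedgeFF (f (wordPrefix W k)) (f g) := by
    have := hB _ _ (toWord_wordPrefix W k ▸ le_wedgeF_iff.1 hk)
    omega
  have h₃ := (le_min hi h₁).trans (min_le_wedgeF W' _ _)
  exact (le_min h₃ h₂).trans (min_le_wedgeF W' _ _)

theorem eq_of_convergesTo [Fintype α] [Fintype β] (hf : Function.Injective f)
    (hB : IsCancellationBound f B) {W V : InfWord β} {W' : InfWord α}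
    (hW : ConvergesTo (fun i => f (wordPrefix W i)) W')
    (hV : ConvergesTo (fun i => f (wordPrefix V i)) W') : W = V := by
  obtain ⟨R, hR⟩ := exists_norm_le_of_norm_map_le hf (2 * B + lipConst f)
  refine InfWord.eq_of_forall_exists_norm_le (R := R) fun i => ?_
  -- choose `V_k` whose image is about as long as that of `W_i`
  obtain ⟨k, hk₁, hk₂⟩ := exists_le_le_add_of_le_succ (a := fun k => (f (wordPrefix V k)).norm)
    (by simp) (norm_map_wordPrefix_succ_le f V)
    ((tendsto_atTop.1 (tendsto_norm_map_wordPrefix hf V) (f (wordPrefix W i)).norm).exists)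
  refine ⟨k, hR _ ?_⟩
  have := hB.le_wedgeF_map hW (le_wedgeF_wordPrefix W i)
  have := hB.le_wedgeF_map hV (le_wedgeF_wordPrefix V k)
  have := min_wedgeF_le_wedgeFF W' (f (wordPrefix W i)) (f (wordPrefix V k))
  have := norm_inv_mul_add_two_mul_wedgeFF (f (wordPrefix W i)) (f (wordPrefix V k))
  rw [← map_inv, ← map_mul] at this
  omega

end IsCancellationBound

end Limits

section AttractingWords

theorem isAttractingFixedWord_iff {φ : FreeGroup α →* FreeGroup α} {W : InfWord α} :
    IsAttractingFixedWord φ W ↔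
      ∀ T : ℕ, ∀ᶠ i in atTop, i + T ≤ wedgeF W (φ (wordPrefix W i)) := by
  refine ⟨fun h T => ?_, fun h => ⟨tendsto_atTop.2 fun T => ?_, tendsto_atTop.2 fun T => ?_⟩⟩
  · filter_upwards [tendsto_atTop.1 h.2 T] with i hi
    omega
  · filter_upwards [h T] with i hi
    omega
  · filter_upwards [h T.toNat] with i hi
    omega

theorem map_fixedSubgroup_le {G H : Type*} [Group G] [Group H] {h : G →* H} {φ : G →* G}
    {ψ : H →* H} (hcomm : ∀ x, h (φ x) = ψ (h x)) :
    Subgroup.map h (fixedSubgroup φ) ≤ fixedSubgroup ψ := by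
  rintro _ ⟨g, hg, rfl⟩
  exact (hcomm g).symm.trans (congrArg h hg)

variable {β : Type*} [DecidableEq β] {h : FreeGroup β →* FreeGroup α}
  {φ : FreeGroup β →* FreeGroup β} {ψ : FreeGroup α →* FreeGroup α} {B : ℕ}
  {W : InfWord β} {W' : InfWord α}

/-- Write `h (W_i) = W'_j s`; then `h (φ (W_i)) = ψ (W'_j) ψ (s)` starts with `h (W_d)` up to
bounded cancellation, and `h (W_d)` is longer than `h (W_i)` by about `|h (W_i⁻¹ W_d)|`. -/
theorem IsCancellationBound.add_norm_le_wedgeF_map_wordPrefix [Fintype α]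
    (hB : IsCancellationBound h B) (hcomm : ∀ x, h (φ x) = ψ (h x))
    (hW' : ConvergesTo (fun i => h (wordPrefix W i)) W') {i j d : ℕ}
    (hij : j + B ≤ (h (wordPrefix W i)).norm) (hid : i ≤ d)
    (hd : d ≤ wedgeF W (φ (wordPrefix W i))) :
    j + (h ((wordPrefix W i)⁻¹ * wordPrefix W d)).norm ≤
      wedgeF W' (ψ (wordPrefix W' j)) + 2 * B +
        2 * (lipConst ψ * ((h (wordPrefix W i)).norm - j)) := by
  have hjx : (wordPrefix W' j).toWord <+: (h (wordPrefix W i)).toWord := by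
    rw [toWord_wordPrefix, ← le_wedgeF_iff]
    exact le_trans (by omega) (hB.le_wedgeF_map hW' (le_wedgeF_wordPrefix W i))
  set s := (wordPrefix W' j)⁻¹ * h (wordPrefix W i)
  have hs : s.norm + j = (h (wordPrefix W i)).norm := by
    simpa using norm_inv_mul_add_norm_of_prefix hjx
  have hψs : (ψ s).norm ≤ lipConst ψ * ((h (wordPrefix W i)).norm - j) :=
    (norm_map_le ψ s).trans_eq (by rw [← hs, Nat.add_sub_cancel])
  have hφ : h (φ (wordPrefix W i)) = ψ (wordPrefix W' j) * ψ s := by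
    rw [hcomm, ← map_mul, mul_inv_cancel_left]
  have hlong : (h ((wordPrefix W i)⁻¹ * wordPrefix W d)).norm + (h (wordPrefix W i)).norm ≤
      (h (wordPrefix W d)).norm + 2 * B := by
    have := norm_inv_mul_add_two_mul_wedgeFF (h (wordPrefix W i)) (h (wordPrefix W d))
    have := hB _ _ (wordPrefix_prefix W hid)
    rw [map_mul, map_inv]
    omega
  have h₁ := hB.le_wedgeF_map hW' hd
  have h₂ := min_le_wedgeF W' (h (φ (wordPrefix W i))) (ψ (wordPrefix W' j))
  have h₃ := wedgeF_le_norm W' (h (φ (wordPrefix W i)))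
  have h₄ := norm_le_wedgeFF_mul_add_norm (ψ (wordPrefix W' j)) (ψ s)
  have h₅ := FreeGroup.norm_mul_le (ψ (wordPrefix W' j)) (ψ s)
  rw [hφ] at h₁ h₂ h₃
  rw [wedgeFF_comm] at h₂
  omega

theorem IsCancellationBound.isAttractingFixedWord_map [Fintype α] [Fintype β]
    (hh : Function.Injective h) (hB : IsCancellationBound h B) (hcomm : ∀ x, h (φ x) = ψ (h x))
    (hW : IsAttractingFixedWord φ W) (hW' : ConvergesTo (fun i => h (wordPrefix W i)) W') :
    IsAttractingFixedWord ψ W' := by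
  rw [isAttractingFixedWord_iff] at hW ⊢
  intro T
  obtain ⟨R, hR⟩ :=
    exists_norm_le_of_norm_map_le hh (T + 2 * B + 2 * (lipConst ψ * (B + lipConst h)))
  obtain ⟨N, hN⟩ := eventually_atTop.1 (hW (R + 1))
  filter_upwards [eventually_gt_atTop (lipConst h * N)] with j hj
  obtain ⟨i, hi₁, hi₂⟩ := exists_le_le_add_of_le_succ (a := fun i => (h (wordPrefix W i)).norm)
    (by simp) (norm_map_wordPrefix_succ_le h W)
    ((tendsto_atTop.1 (tendsto_norm_map_wordPrefix hh W) (j + B)).exists)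
  have hiN : N ≤ i := by
    by_contra! hi
    have h₁ := norm_map_le h (wordPrefix W i)
    have h₂ := Nat.mul_le_mul_left (lipConst h) hi.le
    rw [norm_wordPrefix] at h₁
    omega
  set d := wedgeF W (φ (wordPrefix W i))
  have hd : i + (R + 1) ≤ d := hN i hiN
  have hest := hB.add_norm_le_wedgeF_map_wordPrefix hcomm hW' hi₁ (show i ≤ d by omega) le_rfl
  have hgap := norm_inv_mul_add_norm_of_prefix (wordPrefix_prefix W (show i ≤ d by omega))
  have hψ := Nat.mul_le_mul_left (lipConst ψ)
    (show (h (wordPrefix W i)).norm - j ≤ B + lipConst h by omega)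
  simp only [norm_wordPrefix] at hgap
  by_contra! hlt
  have := hR ((wordPrefix W i)⁻¹ * wordPrefix W d) (by omega)
  omega

end AttractingWords

theorem stmt12_general {m n : ℕ} (h : FreeGroup (Fin m) →* FreeGroup (Fin n))
    (hh : Function.Injective h)
    (φ : FreeGroup (Fin m) →* FreeGroup (Fin m))
    (ψ : FreeGroup (Fin n) →* FreeGroup (Fin n))
    (hcomm : h.comp φ = ψ.comp h) :
    Subgroup.map h (fixedSubgroup φ) ≤ fixedSubgroup ψ ∧
    (∀ W : InfWord (Fin m), IsAttractingFixedWord φ W →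
      ∃ W' : InfWord (Fin n), ConvergesTo (fun i => h (wordPrefix W i)) W' ∧
        IsAttractingFixedWord ψ W') ∧
    (∀ (W V : InfWord (Fin m)) (W' V' : InfWord (Fin n)),
      IsAttractingFixedWord φ W → IsAttractingFixedWord φ V →
      ConvergesTo (fun i => h (wordPrefix W i)) W' →
      ConvergesTo (fun i => h (wordPrefix V i)) V' →
      W' = V' → W = V) := by
  have hcomm' (x : FreeGroup (Fin m)) : h (φ x) = ψ (h x) := DFunLike.congr_fun hcomm x
  obtain ⟨B, hB⟩ := exists_isCancellationBound hh
  refine ⟨map_fixedSubgroup_le hcomm', fun W hW => ?_, fun W V W' V' _ _ hW hV hWV => ?_⟩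
  · obtain ⟨W', hW'⟩ := hB.exists_convergesTo_map (tendsto_norm_map_wordPrefix hh W)
    exact ⟨W', hW', hB.isAttractingFixedWord_map hh hcomm' hW hW'⟩
  · subst hWV
    exact hB.eq_of_convergesTo hh hW hV

/-- Fact 2, Morphism: if `h ∘ φ = ψ ∘ h` with all maps injective,
then `h(fix φ) ⊆ fix ψ` and `W ↦ h̄(W)` is a well-defined injection from attracting
fixed words of `φ` to those of `ψ`. -/
theorem stmt12 {m n : ℕ} (h : FreeGroup (Fin m) →* FreeGroup (Fin n))
    (hh : Function.Injective h)
    (φ : FreeGroup (Fin m) →* FreeGroup (Fin m))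
    (ψ : FreeGroup (Fin n) →* FreeGroup (Fin n))
    (hφ : Function.Injective φ) (hψ : Function.Injective ψ)
    (hcomm : h.comp φ = ψ.comp h) :
    Subgroup.map h (fixedSubgroup φ) ≤ fixedSubgroup ψ ∧
    (∀ W : InfWord (Fin m), IsAttractingFixedWord φ W →
      ∃ W' : InfWord (Fin n), ConvergesTo (fun i => h (wordPrefix W i)) W' ∧
        IsAttractingFixedWord ψ W') ∧
    (∀ (W V : InfWord (Fin m)) (W' V' : InfWord (Fin n)),
      IsAttractingFixedWord φ W → IsAttractingFixedWord φ V →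
      ConvergesTo (fun i => h (wordPrefix W i)) W' →
      ConvergesTo (fun i => h (wordPrefix V i)) V' →
      W' = V' → W = V) :=
  stmt12_general h hh φ ψ hcomm

end ZZFix
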